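/- arXiv:2208.00297 — 2 statements merged into one kernel-verified Lean document; each statement's English description precedes it below -/
import Mathlib

section
/- For every P1-feasible point ((P^{(k)})_k, (Γ_y)_{y=0}^{C}) with threshold ζ there exists a P1-feasible point ((P̃^{(k)})_k, (Γ̃_y)_{y=0}^{C}) with the same threshold ζ and the same communication cost Ω, such that every P̃^{(k)} is supported on the non-chunk-based placement set F̃ = {z ∈ F : z i ∈ {0, C} for all i} (i.e., P̃^{(k)} z = 0 whenever some z i ∉ {0, C}). Hence restricting the feasible placement set in the optimization P1 from F to F̃ does not change the optimal communication cost. -/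
/-- The set of feasible chunk placements:
`F = {z : Fin N → ℕ | (∀ i, z i ≤ C) ∧ ∑ i, z i = M·C}`, encoded with values in
`Fin (C+1)` (so the bound `z i ≤ C` is automatic). -/
def Feas (N C M : ℕ) : Finset (Fin N → Fin (C + 1)) :=
  Finset.univ.filter fun z => ∑ i, (z i : ℕ) = M * C

/-- `qprob P i x = ∑_{z ∈ F, z i = x} P z`, the probability of caching exactly
`x` chunks of file `i` under the cache placement distribution `P`. -/
def qprob (N C M : ℕ) (P : (Fin N → Fin (C + 1)) → ℝ) (i : Fin N) (x : ℕ) : ℝ :=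
  ∑ z ∈ (Feas N C M).filter (fun z => (z i : ℕ) = x), P z

/-- `P` is a pmf on the feasible placement set `F`. -/
def IsPmfOnFeas (N C M : ℕ) (P : (Fin N → Fin (C + 1)) → ℝ) : Prop :=
  (∀ z ∈ Feas N C M, 0 ≤ P z) ∧ ∑ z ∈ Feas N C M, P z = 1

/-- The communication cost
`Ω = (1/C) ∑_k ∑_i ∑_{y=0}^{C} pg_k · p_i · y · q^{(k)}_{i, C−y}`. -/
noncomputable def commCost (N K C M : ℕ) (p : Fin N → ℝ) (pg : Fin K → ℝ)
    (P : Fin K → (Fin N → Fin (C + 1)) → ℝ) : ℝ :=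
  (1 / (C : ℝ)) * ∑ k : Fin K, ∑ i : Fin N, ∑ y ∈ Finset.range (C + 1),
    pg k * p i * (y : ℝ) * qprob N C M (P k) i (C - y)

/-- P1-feasibility: each `P^{(k)}` is a pmf on `F`,
`Γ_y ≥ p_i · pg_k · q^{(k)}_{i,C−y}` for all `k, i, y ∈ {0,…,C}`, and
`1 − ∑_{y=0}^{C} Γ_y ≥ ζ`. -/
def P1Feasible (N K C M : ℕ) (p : Fin N → ℝ) (pg : Fin K → ℝ) (ζ : ℝ)
    (P : Fin K → (Fin N → Fin (C + 1)) → ℝ) (Γ : ℕ → ℝ) : Prop :=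
  (∀ k, IsPmfOnFeas N C M (P k)) ∧
  (∀ (k : Fin K) (i : Fin N), ∀ y ∈ Finset.range (C + 1),
    Γ y ≥ p i * pg k * qprob N C M (P k) i (C - y)) ∧
  1 - ∑ y ∈ Finset.range (C + 1), Γ y ≥ ζ

/-- P2-feasibility: `0 ≤ α^{(k)}_i ≤ 1`, `∑_i α^{(k)}_i = M` for every `k`,
`γ_0 ≥ pg_k · p_i · α^{(k)}_i`, `γ_1 ≥ pg_k · p_i · (1 − α^{(k)}_i)`, and
`1 − γ_0 − γ_1 ≥ ζ`. -/
def P2Feasible (N K M : ℕ) (p : Fin N → ℝ) (pg : Fin K → ℝ) (ζ : ℝ)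
    (α : Fin K → Fin N → ℝ) (γ0 γ1 : ℝ) : Prop :=
  (∀ k i, 0 ≤ α k i ∧ α k i ≤ 1) ∧
  (∀ k, ∑ i, α k i = (M : ℝ)) ∧
  (∀ k i, γ0 ≥ pg k * p i * α k i) ∧
  (∀ k i, γ1 ≥ pg k * p i * (1 - α k i)) ∧
  1 - γ0 - γ1 ≥ ζ

/-!
Only the expected fraction of each file that is missing from a cache enters the cost, and the
privacy constraints survive if every threshold `Γ y` is split between `y = 0` and `y = C` in the
ratio `(C - y) : y`. So it suffices to realise any vector of cached fractions `α ∈ [0,1]^N` with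
`∑ α = M` by a distribution on placements that cache exactly `M` whole files. The `N × N` matrix
whose first `M` rows equal `α / M` and whose other rows equal `(1 - α) / (N - M)` is doubly
stochastic; by Birkhoff's theorem it is a convex combination of permutation matrices, and a
permutation `σ` is read as the placement caching the files that `σ` assigns to the first `M` rows.
-/

open Finset

section Marginals

variable {N C M : ℕ}

lemma mem_Feas {z : Fin N → Fin (C + 1)} : z ∈ Feas N C M ↔ ∑ i, (z i : ℕ) = M * C := by
  simp [Feas]

lemma qprob_nonneg {P : (Fin N → Fin (C + 1)) → ℝ} (hP : IsPmfOnFeas N C M P) (i : Fin N)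
    (x : ℕ) : 0 ≤ qprob N C M P i x :=
  sum_nonneg fun z hz => hP.1 z (mem_of_mem_filter z hz)

lemma sum_mul_qprob (P : (Fin N → Fin (C + 1)) → ℝ) (i : Fin N) (f : ℕ → ℝ) :
    ∑ x ∈ range (C + 1), f x * qprob N C M P i x = ∑ z ∈ Feas N C M, f (z i) * P z := by
  rw [← sum_fiberwise_of_maps_to (g := fun z : Fin N → Fin (C + 1) => (z i : ℕ))
    (fun z _ => mem_range.2 (z i).isLt)]
  refine sum_congr rfl fun x _ => ?_
  rw [qprob, mul_sum]
  exact sum_congr rfl fun z hz => by rw [(mem_filter.1 hz).2]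

lemma sum_mul_qprob_sub (P : (Fin N → Fin (C + 1)) → ℝ) (i : Fin N) (f : ℕ → ℝ) :
    ∑ y ∈ range (C + 1), f y * qprob N C M P i (C - y) =
      ∑ z ∈ Feas N C M, f (C - z i) * P z := by
  rw [← sum_mul_qprob P i fun x => f (C - x), ← sum_range_reflect]
  refine sum_congr rfl fun x hx => ?_
  rw [Nat.add_sub_cancel, Nat.sub_sub_self (Nat.lt_succ_iff.1 (mem_range.1 hx))]

lemma sum_qprob_sub {P : (Fin N → Fin (C + 1)) → ℝ} (hP : IsPmfOnFeas N C M P) (i : Fin N) :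
    ∑ y ∈ range (C + 1), qprob N C M P i (C - y) = 1 := by
  simpa [hP.2] using sum_mul_qprob_sub (M := M) P i (fun _ => 1)

end Marginals

/-- The expected fraction of file `i` that is not cached, i.e. that has to be delivered. -/
noncomputable def missingFraction (N C M : ℕ) (P : (Fin N → Fin (C + 1)) → ℝ) (i : Fin N) : ℝ :=
  ∑ y ∈ range (C + 1), (y / C : ℝ) * qprob N C M P i (C - y)

section MissingFraction

variable {N C M : ℕ}

lemma commCost_eq_sum_missingFraction (K : ℕ) (p : Fin N → ℝ) (pg : Fin K → ℝ)
    (P : Fin K → (Fin N → Fin (C + 1)) → ℝ) :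
    commCost N K C M p pg P = ∑ k, ∑ i, pg k * p i * missingFraction N C M (P k) i := by
  simp only [commCost, missingFraction, mul_sum]
  exact sum_congr rfl fun k _ => sum_congr rfl fun i _ => sum_congr rfl fun y _ => by ring

lemma missingFraction_nonneg {P : (Fin N → Fin (C + 1)) → ℝ} (hP : IsPmfOnFeas N C M P)
    (i : Fin N) : 0 ≤ missingFraction N C M P i :=
  sum_nonneg fun _ _ => mul_nonneg (by positivity) (qprob_nonneg hP i _)

lemma missingFraction_le_one {P : (Fin N → Fin (C + 1)) → ℝ} (hP : IsPmfOnFeas N C M P)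
    (i : Fin N) : missingFraction N C M P i ≤ 1 := by
  rw [← sum_qprob_sub hP i]
  refine sum_le_sum fun y hy => mul_le_of_le_one_left (qprob_nonneg hP i _) ?_
  exact div_le_one_of_le₀ (by exact_mod_cast Nat.lt_succ_iff.1 (mem_range.1 hy)) (by positivity)

lemma sum_missingFraction (hC : C ≠ 0) {P : (Fin N → Fin (C + 1)) → ℝ}
    (hP : IsPmfOnFeas N C M P) : ∑ i, missingFraction N C M P i = N - M := by
  have hz : ∀ z ∈ Feas N C M, ∑ i, ((C - z i : ℕ) : ℝ) / C = N - M := by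
    intro z hz
    have hsum : ∑ i, ((z i : ℕ) : ℝ) = M * C := by exact_mod_cast mem_Feas.1 hz
    simp only [← sum_div, Nat.cast_sub (Nat.lt_succ_iff.1 (z _).isLt), sum_sub_distrib, hsum,
      sum_const, card_univ, Fintype.card_fin, nsmul_eq_mul]
    field_simp
  simp only [missingFraction, sum_mul_qprob_sub]
  rw [sum_comm, ← mul_one ((N : ℝ) - M), ← hP.2, mul_sum]
  exact sum_congr rfl fun z hz' => by rw [← sum_mul, hz z hz']

end MissingFraction

lemma sum_fin_ite_lt {β : Type*} [AddCommMonoid β] {N M : ℕ} (hMN : M ≤ N) (a b : β) :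
    ∑ r : Fin N, (if (r : ℕ) < M then a else b) = M • a + (N - M) • b := by
  obtain ⟨L, rfl⟩ := Nat.exists_eq_add_of_le hMN
  rw [Fin.sum_univ_eq_sum_range (fun r => if r < M then a else b), sum_range_add,
    sum_congr rfl fun r hr => if_pos (mem_range.1 hr)]
  simp

noncomputable def slotMatrix (N M : ℕ) (α : Fin N → ℝ) : Matrix (Fin N) (Fin N) ℝ :=
  Matrix.of fun r i => if (r : ℕ) < M then α i / M else (1 - α i) / (N - M)

section Rounding

variable {N M : ℕ} {α : Fin N → ℝ}

lemma slotMatrix_mem_doublyStochastic (hM : 1 ≤ M) (hMN : M ≤ N) (hα0 : ∀ i, 0 ≤ α i)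
    (hα1 : ∀ i, α i ≤ 1) (hsum : ∑ i, α i = M) : slotMatrix N M α ∈ doublyStochastic ℝ (Fin N) := by
  have hM0 : (M : ℝ) ≠ 0 := by positivity
  have hsum' : ∑ i, (1 - α i) = N - M := by simp [sum_sub_distrib, hsum]
  refine mem_doublyStochastic_iff_sum.2 ⟨fun r i => ?_, fun r => ?_, fun i => ?_⟩
  · have : (M : ℝ) ≤ N := by exact_mod_cast hMN
    simp only [slotMatrix, Matrix.of_apply]
    split_ifs
    · exact div_nonneg (hα0 i) (Nat.cast_nonneg M)
    · exact div_nonneg (sub_nonneg.2 (hα1 i)) (sub_nonneg.2 this)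
  · simp only [slotMatrix, Matrix.of_apply]
    split_ifs with hr
    · rw [← sum_div, hsum, div_self hM0]
    · have : (M : ℝ) < N := by exact_mod_cast (not_lt.1 hr).trans_lt r.isLt
      rw [← sum_div, hsum', div_self (sub_ne_zero.2 this.ne')]
  · have hα1' : (N : ℝ) - M = 0 → 1 - α i = 0 := fun h =>
      (sum_eq_zero_iff_of_nonneg fun j _ => sub_nonneg.2 (hα1 j)).1 (hsum'.trans h) i (mem_univ i)
    simp only [slotMatrix, Matrix.of_apply]
    rw [sum_fin_ite_lt hMN, nsmul_eq_mul, nsmul_eq_mul, Nat.cast_sub hMN,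
      mul_div_cancel₀ _ hM0, mul_div_cancel_of_imp' hα1']
    ring

lemma exists_perm_weights_marginal (hM : 1 ≤ M) (hMN : M ≤ N) (hα0 : ∀ i, 0 ≤ α i)
    (hα1 : ∀ i, α i ≤ 1) (hsum : ∑ i, α i = M) :
    ∃ w : Equiv.Perm (Fin N) → ℝ, (∀ σ, 0 ≤ w σ) ∧ ∑ σ, w σ = 1 ∧
      ∀ i, ∑ σ with (σ.symm i : ℕ) < M, w σ = α i := by
  obtain ⟨w, hw0, hw1, hwD⟩ := exists_eq_sum_perm_of_mem_doublyStochastic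
    (slotMatrix_mem_doublyStochastic hM hMN hα0 hα1 hsum)
  refine ⟨w, hw0, hw1, fun i => ?_⟩
  have hM0 : (M : ℝ) ≠ 0 := by positivity
  have hentry : ∀ r, slotMatrix N M α r i = ∑ σ, w σ * if σ r = i then 1 else 0 := by
    intro r
    rw [← hwD]
    simp [Matrix.sum_apply, Equiv.Perm.permMatrix, PEquiv.toMatrix_apply]
  calc ∑ σ with (σ.symm i : ℕ) < M, w σ
      = ∑ σ, w σ * ∑ r : Fin N, if (r : ℕ) < M then (if σ r = i then 1 else 0) else 0 := by
        rw [sum_filter]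
        refine sum_congr rfl fun σ _ => ?_
        simp only [← Equiv.eq_symm_apply, ← ite_and, and_comm (a := _ < M)]
        simp [ite_and]
    _ = ∑ r : Fin N, if (r : ℕ) < M then slotMatrix N M α r i else 0 := by
        simp only [hentry, mul_ite, mul_zero, mul_sum]
        rw [sum_comm]
        exact sum_congr rfl fun r _ => by split_ifs <;> simp
    _ = α i := by
        simp only [slotMatrix, Matrix.of_apply]
        rw [sum_congr rfl fun r _ => ite_congr rfl (fun hr => if_pos hr) fun _ => rfl,
          sum_fin_ite_lt hMN, nsmul_eq_mul, mul_div_cancel₀ _ hM0, smul_zero, add_zero]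

end Rounding

def permPlacement {N : ℕ} (C M : ℕ) (σ : Equiv.Perm (Fin N)) : Fin N → Fin (C + 1) :=
  fun i => if (σ.symm i : ℕ) < M then Fin.last C else 0

section Placement

variable {N C M : ℕ}

lemma permPlacement_val (σ : Equiv.Perm (Fin N)) (i : Fin N) :
    (permPlacement C M σ i : ℕ) = if (σ.symm i : ℕ) < M then C else 0 := by
  unfold permPlacement
  split_ifs <;> simp

lemma permPlacement_mem_Feas (hMN : M ≤ N) (σ : Equiv.Perm (Fin N)) :
    permPlacement C M σ ∈ Feas N C M := by
  rw [mem_Feas]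
  simp only [permPlacement_val]
  rw [Equiv.sum_comp σ.symm (fun r => if (r : ℕ) < M then C else 0), sum_fin_ite_lt hMN]
  simp

lemma qprob_pushforward {ι : Type*} [Fintype ι] (w : ι → ℝ) (f : ι → Fin N → Fin (C + 1))
    (hf : ∀ σ, f σ ∈ Feas N C M) (i : Fin N) (x : ℕ) :
    qprob N C M (fun z => ∑ σ with f σ = z, w σ) i x = ∑ σ with (f σ i : ℕ) = x, w σ := by
  rw [qprob, sum_fiberwise_eq_sum_filter]
  congr 1
  ext σ
  simp [hf σ]

lemma exists_binary_pmf (hC : C ≠ 0) (hM : 1 ≤ M) (hMN : M ≤ N) {β : Fin N → ℝ}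
    (hβ0 : ∀ i, 0 ≤ β i) (hβ1 : ∀ i, β i ≤ 1) (hsum : ∑ i, β i = N - M) :
    ∃ Q : (Fin N → Fin (C + 1)) → ℝ, IsPmfOnFeas N C M Q ∧
      (∀ z, (¬ ∀ i, (z i : ℕ) = 0 ∨ (z i : ℕ) = C) → Q z = 0) ∧
      ∀ i x, qprob N C M Q i x = if x = 0 then β i else if x = C then 1 - β i else 0 := by
  obtain ⟨w, hw0, hw1, hwα⟩ := exists_perm_weights_marginal (α := fun i => 1 - β i) hM hMN
    (fun i => sub_nonneg.2 (hβ1 i)) (fun i => by linarith [hβ0 i])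
    (by simp [sum_sub_distrib, hsum])
  have hF := permPlacement_mem_Feas (C := C) hMN
  refine ⟨fun z => ∑ σ with permPlacement C M σ = z, w σ,
    ⟨fun z _ => sum_nonneg fun σ _ => hw0 σ, ?_⟩, fun z hz => ?_, fun i x => ?_⟩
  · rw [sum_fiberwise_eq_sum_filter, filter_true_of_mem fun σ _ => hF σ, hw1]
  · refine sum_eq_zero fun σ hσ => absurd (fun i => ?_) hz
    rw [← (mem_filter.1 hσ).2, permPlacement_val]
    split_ifs <;> simp
  · rw [qprob_pushforward w _ hF]
    simp only [permPlacement_val]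
    split_ifs with hx0 hxC
    · have hiff : ∀ σ : Equiv.Perm (Fin N),
          (if (σ.symm i : ℕ) < M then C else 0) = x ↔ ¬ (σ.symm i : ℕ) < M := fun σ => by
        split_ifs <;> simp [*]
      rw [filter_congr fun σ _ => hiff σ]
      linarith [hwα i, sum_filter_not_add_sum_filter univ (fun σ => (σ.symm i : ℕ) < M) w]
    · have hiff : ∀ σ : Equiv.Perm (Fin N),
          (if (σ.symm i : ℕ) < M then C else 0) = x ↔ (σ.symm i : ℕ) < M := fun σ => by
        split_ifs <;> simp [*, Ne.symm hC]
      rw [filter_congr fun σ _ => hiff σ, hwα i]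
    · refine sum_eq_zero fun σ hσ => ?_
      have := (mem_filter.1 hσ).2
      split_ifs at this <;> omega

end Placement

noncomputable def binaryGamma (C : ℕ) (Γ : ℕ → ℝ) (y : ℕ) : ℝ :=
  (if y = 0 then ∑ t ∈ range (C + 1), (1 - t / C : ℝ) * Γ t else 0) +
    if y = C then ∑ t ∈ range (C + 1), (t / C : ℝ) * Γ t else 0

section Privacy

variable {N C M : ℕ} {P Q : (Fin N → Fin (C + 1)) → ℝ} {i : Fin N}

lemma sum_binaryGamma (Γ : ℕ → ℝ) :
    ∑ y ∈ range (C + 1), binaryGamma C Γ y = ∑ y ∈ range (C + 1), Γ y := by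
  rw [← sum_congr rfl fun (t : ℕ) _ => show (1 - t / C : ℝ) * Γ t + t / C * Γ t = Γ t by ring,
    sum_add_distrib]
  simp [binaryGamma, sum_add_distrib]

lemma mul_sum_qprob_sub_le {Γ : ℕ → ℝ} {c : ℝ}
    (hΓ : ∀ y ∈ range (C + 1), Γ y ≥ c * qprob N C M P i (C - y)) {a : ℕ → ℝ}
    (ha : ∀ y ∈ range (C + 1), 0 ≤ a y) :
    c * ∑ y ∈ range (C + 1), a y * qprob N C M P i (C - y) ≤ ∑ y ∈ range (C + 1), a y * Γ y := by
  rw [mul_sum]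
  refine sum_le_sum fun y hy => ?_
  rw [mul_left_comm]
  exact mul_le_mul_of_nonneg_left (hΓ y hy) (ha y hy)

lemma missingFraction_eq_of_qprob (hC : C ≠ 0) {β : ℝ}
    (hQ : ∀ x, qprob N C M Q i x = if x = 0 then β else if x = C then 1 - β else 0) :
    missingFraction N C M Q i = β := by
  rw [missingFraction, sum_eq_single_of_mem C (self_mem_range_succ C)]
  · simp [hQ, hC]
  · intro y hy hyC
    have : y ≤ C := Nat.lt_succ_iff.1 (mem_range.1 hy)
    rcases Nat.eq_zero_or_pos y with rfl | hy0
    · simp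
    · rw [hQ, if_neg (by omega), if_neg (by omega), mul_zero]

lemma le_binaryGamma (hC : C ≠ 0) (hP : IsPmfOnFeas N C M P) {Γ : ℕ → ℝ} {c : ℝ}
    (hΓ : ∀ y ∈ range (C + 1), Γ y ≥ c * qprob N C M P i (C - y))
    (hQ : ∀ x, qprob N C M Q i x = if x = 0 then missingFraction N C M P i
      else if x = C then 1 - missingFraction N C M P i else 0) :
    ∀ y ∈ range (C + 1), binaryGamma C Γ y ≥ c * qprob N C M Q i (C - y) := by
  intro y hy
  have hyC : y ≤ C := Nat.lt_succ_iff.1 (mem_range.1 hy)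
  rw [hQ, binaryGamma]
  rcases Nat.eq_zero_or_pos y with rfl | hy0
  · have hone : 1 - missingFraction N C M P i =
        ∑ t ∈ range (C + 1), (1 - t / C : ℝ) * qprob N C M P i (C - t) := by
      simp only [missingFraction, sub_mul, one_mul, sum_sub_distrib, sum_qprob_sub hP]
    simp only [Nat.sub_zero, if_neg hC, if_neg (Ne.symm hC), add_zero, hone]
    refine mul_sum_qprob_sub_le hΓ fun t ht => sub_nonneg.2 ?_
    exact div_le_one_of_le₀ (by exact_mod_cast Nat.lt_succ_iff.1 (mem_range.1 ht)) (by positivity)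
  rcases hyC.eq_or_lt with rfl | hlt
  · simp only [Nat.sub_self, if_neg hC, zero_add]
    exact mul_sum_qprob_sub_le hΓ fun _ _ => by positivity
  · simp [hy0.ne', hlt.ne, Nat.sub_ne_zero_of_lt hlt, show C - y ≠ C by omega]

lemma P1Feasible_binaryGamma (hC : C ≠ 0) {K : ℕ} {p : Fin N → ℝ} {pg : Fin K → ℝ} {ζ : ℝ}
    {P Q : Fin K → (Fin N → Fin (C + 1)) → ℝ} {Γ : ℕ → ℝ}
    (hfeas : P1Feasible N K C M p pg ζ P Γ) (hQ : ∀ k, IsPmfOnFeas N C M (Q k))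
    (hq : ∀ k i x, qprob N C M (Q k) i x = if x = 0 then missingFraction N C M (P k) i
      else if x = C then 1 - missingFraction N C M (P k) i else 0) :
    P1Feasible N K C M p pg ζ Q (binaryGamma C Γ) :=
  ⟨hQ, fun k i => le_binaryGamma hC (hfeas.1 k) (hfeas.2.1 k i) (hq k i),
    by rw [sum_binaryGamma]; exact hfeas.2.2⟩

end Privacy

theorem stmt5_general (N K C M : ℕ) (hC : 1 ≤ C) (hM : 1 ≤ M) (hMN : M ≤ N)
    (p : Fin N → ℝ) (pg : Fin K → ℝ) (ζ : ℝ) (P : Fin K → (Fin N → Fin (C + 1)) → ℝ) (Γ : ℕ → ℝ)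
    (hfeas : P1Feasible N K C M p pg ζ P Γ) :
    ∃ (P' : Fin K → (Fin N → Fin (C + 1)) → ℝ) (Γ' : ℕ → ℝ),
      P1Feasible N K C M p pg ζ P' Γ' ∧
      commCost N K C M p pg P' = commCost N K C M p pg P ∧
      ∀ (k : Fin K) (z : Fin N → Fin (C + 1)),
        (¬ ∀ i, (z i : ℕ) = 0 ∨ (z i : ℕ) = C) → P' k z = 0 := by
  have hC0 : C ≠ 0 := by omega
  choose Q hQ hQbin hq using fun k => exists_binary_pmf hC0 hM hMN
    (missingFraction_nonneg (hfeas.1 k)) (missingFraction_le_one (hfeas.1 k))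
    (sum_missingFraction hC0 (hfeas.1 k))
  refine ⟨Q, binaryGamma C Γ, P1Feasible_binaryGamma hC0 hfeas hQ hq, ?_, hQbin⟩
  simp only [commCost_eq_sum_missingFraction, missingFraction_eq_of_qprob hC0 (hq _ _)]

/-- Corollary 1: every P1-feasible point can be replaced by a P1-feasible
point with the same threshold `ζ` and the same communication cost whose
policies are supported on the non-chunk-based placement set
`F̃ = {z ∈ F : z i ∈ {0, C} for all i}`; hence restricting `F` to `F̃` does not
change the optimal communication cost of P1. -/
theorem stmt5 (N K C M : ℕ) (hN : 1 ≤ N) (hK : 1 ≤ K) (hC : 1 ≤ C)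
    (hM : 1 ≤ M) (hMN : M ≤ N)
    (p : Fin N → ℝ) (hp0 : ∀ i, 0 ≤ p i) (hp1 : ∑ i, p i = 1)
    (pg : Fin K → ℝ) (hpg0 : ∀ k, 0 ≤ pg k) (hpg1 : ∑ k, pg k = 1)
    (ζ : ℝ) (P : Fin K → (Fin N → Fin (C + 1)) → ℝ) (Γ : ℕ → ℝ)
    (hfeas : P1Feasible N K C M p pg ζ P Γ) :
    ∃ (P' : Fin K → (Fin N → Fin (C + 1)) → ℝ) (Γ' : ℕ → ℝ),
      P1Feasible N K C M p pg ζ P' Γ' ∧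
      commCost N K C M p pg P' = commCost N K C M p pg P ∧
      ∀ (k : Fin K) (z : Fin N → Fin (C + 1)),
        (¬ ∀ i, (z i : ℕ) = 0 ∨ (z i : ℕ) = C) → P' k z = 0 :=
  stmt5_general N K C M hC hM hMN p pg ζ P Γ hfeas
end

section
/- Let L ≥ 1, let n : Fin L → ℕ with n_l ≥ 1, let h and M be positive integers with h ≤ n_l for every l and h dividing M, and let e : Fin L → ℝ satisfy 1 − h/n_l ≤ e_l ≤ 1 for every l and ∑_{l} n_l · (1 − e_l) = M. Then there exists a pmf ǒ on the set F̌ = {ž : Fin L → ℕ | (∀ l, ž_l ∈ {0, h}) ∧ ∑_l ž_l = M} such that for every l, ∑_{ž ∈ F̌, ž_l = h} ǒ(ž) = n_l·(1 − e_l)/h; consequently, for every l, ∑_{ž ∈ F̌} ǒ(ž) · (1 − ž_l / n_l) = e_l. -/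
/-! The normalized targets `x_l = n_l (1 - e_l) / h` form a point of the hypersimplex
`{x ∈ [0,1]^L | ∑ x_l = M / h}`. This compact convex set is the convex hull of its `0/1` points:
by Krein–Milman it suffices that every extreme point is `0/1`, and a point with a fractional
coordinate has a second one (the coordinate sum is an integer), so it can be moved both ways
along `e_i - e_j` without leaving the set. The `0/1` points are the placements of `F̌` scaled
by `1/h`, and the weights of a convex combination give the pmf `ǒ`. -/

/-- The single-chunk feasible placement set
`F̌ = {ž : Fin L → ℕ | (∀ l, ž_l ∈ {0, h}) ∧ ∑_l ž_l = M}`, encoded with values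
in `Fin (M+1)` (the bound `ž_l ≤ M` is automatic from `ž_l ∈ {0,h}`, `h ≤ M`,
and the sum constraint). -/
def FeasCheck (L h M : ℕ) : Finset (Fin L → Fin (M + 1)) :=
  Finset.univ.filter fun z =>
    (∀ l, (z l : ℕ) = 0 ∨ (z l : ℕ) = h) ∧ ∑ l, (z l : ℕ) = M

open Set

def hypersimplex (ι : Type*) [Fintype ι] (m : ℕ) : Set (ι → ℝ) :=
  univ.pi (fun _ => Icc 0 1) ∩ {x | ∑ i, x i = m}

section Hypersimplex

variable {ι : Type*} [Fintype ι]

theorem convex_hypersimplex (m : ℕ) : Convex ℝ (hypersimplex ι m) := by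
  refine (convex_pi fun _ _ => convex_Icc 0 1).inter fun x hx y hy a b _ _ hab => ?_
  simp only [mem_ofPred_eq, Pi.add_apply, Pi.smul_apply, smul_eq_mul] at hx hy ⊢
  rw [Finset.sum_add_distrib, ← Finset.mul_sum, ← Finset.mul_sum, hx, hy, ← add_mul, hab, one_mul]

theorem isCompact_hypersimplex (m : ℕ) : IsCompact (hypersimplex ι m) :=
  (isCompact_univ_pi fun _ => isCompact_Icc).inter_right <|
    isClosed_eq (by fun_prop) continuous_const

theorem add_single_sub_single_mem_hypersimplex [DecidableEq ι] {m : ℕ} {x : ι → ℝ}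
    (hx : x ∈ hypersimplex ι m) {i j : ι} (hij : i ≠ j) {c : ℝ}
    (hi : x i + c ∈ Icc 0 1) (hj : x j - c ∈ Icc 0 1) :
    x + (Pi.single i c - Pi.single j c) ∈ hypersimplex ι m := by
  refine ⟨fun l _ => ?_, ?_⟩
  · rcases eq_or_ne l i with rfl | hli
    · simpa [hij] using hi
    rcases eq_or_ne l j with rfl | hlj
    · simpa [hli] using hj
    simpa [hli, hlj] using hx.1 l trivial
  · simp [Finset.sum_add_distrib, Finset.sum_sub_distrib, hx.2.out]

theorem exists_ne_mem_Ioo_of_mem_hypersimplex {m : ℕ} {x : ι → ℝ} (hx : x ∈ hypersimplex ι m)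
    {i : ι} (hi : x i ∈ Ioo 0 1) : ∃ j ≠ i, x j ∈ Ioo 0 1 := by
  classical
  by_contra! hint
  have hbool : ∀ j ∈ Finset.univ.erase i, x j = if x j = 1 then 1 else 0 := by
    intro j hj
    have : x j ∈ Icc 0 1 \ Ioo 0 1 := ⟨hx.1 j trivial, hint j (Finset.ne_of_mem_erase hj)⟩
    rw [Icc_sdiff_Ioo_same zero_le_one] at this
    obtain h | h : x j = 0 ∨ x j = 1 := this <;> simp [h]
  have hsplit := Finset.add_sum_erase Finset.univ x (Finset.mem_univ i)
  rw [Finset.sum_congr rfl hbool, Finset.sum_boole, hx.2.out] at hsplit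
  obtain ⟨k, hk⟩ : ∃ k : ℕ, x i + k = m := ⟨_, hsplit⟩
  obtain ⟨hi0, hi1⟩ := hi
  rcases lt_or_ge k m with hkm | hkm
  · have : (k : ℝ) + 1 ≤ m := by exact_mod_cast hkm
    linarith
  · have : (m : ℝ) ≤ k := by exact_mod_cast hkm
    linarith

theorem eq_zero_or_eq_one_of_mem_extremePoints_hypersimplex {m : ℕ} {x : ι → ℝ}
    (hx : x ∈ (hypersimplex ι m).extremePoints ℝ) (i : ι) : x i = 0 ∨ x i = 1 := by
  classical
  by_contra! hfrac
  have hi : x i ∈ Ioo 0 1 := ⟨(hx.1.1 i trivial).1.lt_of_ne' hfrac.1,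
    (hx.1.1 i trivial).2.lt_of_ne hfrac.2⟩
  obtain ⟨j, hji, hj⟩ := exists_ne_mem_Ioo_of_mem_hypersimplex hx.1 hi
  set ε := min (min (x i) (1 - x i)) (min (x j) (1 - x j))
  have hε : 0 < ε := by
    simp only [ε, lt_min_iff, sub_pos]
    exact ⟨⟨hi.1, hi.2⟩, hj.1, hj.2⟩
  have hεi : ε ≤ x i ∧ ε ≤ 1 - x i := ⟨(min_le_left _ _).trans (min_le_left _ _),
    (min_le_left _ _).trans (min_le_right _ _)⟩
  have hεj : ε ≤ x j ∧ ε ≤ 1 - x j := ⟨(min_le_right _ _).trans (min_le_left _ _),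
    (min_le_right _ _).trans (min_le_right _ _)⟩
  set d : ι → ℝ := Pi.single i ε - Pi.single j ε
  have hplus : x + d ∈ hypersimplex ι m :=
    add_single_sub_single_mem_hypersimplex hx.1 hji.symm
      ⟨by linarith, by linarith⟩ ⟨by linarith, by linarith⟩
  have hminus : x - d ∈ hypersimplex ι m := by
    have := add_single_sub_single_mem_hypersimplex hx.1 hji.symm (c := -ε)
      ⟨by linarith, by linarith⟩ ⟨by linarith, by linarith⟩
    rwa [Pi.single_neg, Pi.single_neg, neg_sub_neg, ← neg_sub, ← sub_eq_add_neg] at this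
  have hd : x + d = x := (mem_extremePoints_iff_left.1 hx).2 _ hplus _ hminus
    (mem_openSegment_add_sub x d)
  exact hε.ne' (by simpa [d, hji.symm] using congr_fun hd i)

theorem hypersimplex_subset_convexHull (m : ℕ) :
    hypersimplex ι m ⊆ convexHull ℝ {x ∈ hypersimplex ι m | ∀ i, x i = 0 ∨ x i = 1} := by
  have hfin : {x ∈ hypersimplex ι m | ∀ i, x i = 0 ∨ x i = 1}.Finite :=
    (Set.Finite.pi (t := fun _ => ({0, 1} : Set ℝ)) fun _ => toFinite _).subset
      fun x hx i _ => hx.2 i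
  calc hypersimplex ι m
      = closure (convexHull ℝ ((hypersimplex ι m).extremePoints ℝ)) :=
        (closure_convexHull_extremePoints (isCompact_hypersimplex m) (convex_hypersimplex m)).symm
    _ ⊆ closure (convexHull ℝ {x ∈ hypersimplex ι m | ∀ i, x i = 0 ∨ x i = 1}) :=
        closure_mono <| convexHull_mono fun x hx =>
          ⟨hx.1, eq_zero_or_eq_one_of_mem_extremePoints_hypersimplex hx⟩
    _ = convexHull ℝ {x ∈ hypersimplex ι m | ∀ i, x i = 0 ∨ x i = 1} :=
        (hfin.isClosed_convexHull (𝕜 := ℝ)).closure_eq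

end Hypersimplex

theorem Finset.exists_weights_of_mem_convexHull_image {R E α : Type*} [Field R] [LinearOrder R]
    [IsStrictOrderedRing R] [AddCommGroup E] [Module R E] {s : Finset α} {f : α → E}
    (hf : InjOn f s) {x : E} (hx : x ∈ convexHull R (f '' s)) :
    ∃ w : α → R, (∀ a ∈ s, 0 ≤ w a) ∧ ∑ a ∈ s, w a = 1 ∧ ∑ a ∈ s, w a • f a = x := by
  classical
  rw [← Finset.coe_image] at hx
  obtain ⟨w, hw₀, hw₁, hwx⟩ := Finset.mem_convexHull'.1 hx
  rw [Finset.sum_image hf] at hw₁ hwx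
  exact ⟨w ∘ f, fun a ha => hw₀ _ (Finset.mem_image_of_mem f ha), hw₁, hwx⟩

noncomputable def normalizedPlacement {L M : ℕ} (h : ℕ) (z : Fin L → Fin (M + 1)) : Fin L → ℝ :=
  fun l => (z l : ℝ) / h

section normalizedPlacement

variable {L M h : ℕ}

theorem normalizedPlacement_injective (hh : h ≠ 0) :
    Function.Injective (normalizedPlacement (L := L) (M := M) h) := fun z z' hzz' =>
  funext fun l => Fin.ext <| by
    have := congr_fun hzz' l
    simp only [normalizedPlacement] at this
    exact_mod_cast (div_left_inj' (Nat.cast_ne_zero.2 hh)).1 this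

theorem normalizedPlacement_of_mem_feasCheck (hh : h ≠ 0) {z : Fin L → Fin (M + 1)}
    (hz : z ∈ FeasCheck L h M) (l : Fin L) :
    normalizedPlacement h z l = if (z l : ℕ) = h then 1 else 0 := by
  rcases (Finset.mem_filter.1 hz).2.1 l with h0 | hl
  · simp [normalizedPlacement, h0, Ne.symm hh]
  · simp [normalizedPlacement, hl, hh]

theorem zeroOne_hypersimplex_subset_normalizedPlacement_image {m : ℕ} (hm : 0 < m) (hh : h ≠ 0) :
    {x ∈ hypersimplex (Fin L) m | ∀ i, x i = 0 ∨ x i = 1} ⊆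
      normalizedPlacement h '' (FeasCheck L h (h * m) : Set (Fin L → Fin (h * m + 1))) := by
  classical
  rintro x ⟨⟨-, hsum⟩, hx⟩
  have hcard : (Finset.univ.filter (x · = 1)).card = m := by
    have : ∑ l, x l = ∑ l, if x l = 1 then (1 : ℝ) else 0 :=
      Finset.sum_congr rfl fun l _ => by rcases hx l with h0 | h1 <;> simp [*]
    rw [← Nat.cast_inj (R := ℝ), ← Finset.sum_boole, ← this, hsum.out]
  have hhm : h < h * m + 1 := Nat.lt_succ_of_le (Nat.le_mul_of_pos_right h hm)
  refine ⟨fun l => if x l = 1 then ⟨h, hhm⟩ else 0, ?_, funext fun l => ?_⟩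
  · refine Finset.mem_filter.2 ⟨Finset.mem_univ _, fun l => ?_, ?_⟩
    · by_cases hl : x l = 1 <;> simp [hl]
    · simp only [apply_ite Fin.val, Fin.val_zero]
      rw [Finset.sum_ite, Finset.sum_const_zero, add_zero, Finset.sum_const, hcard, smul_eq_mul,
        mul_comm]
  · rcases hx l with h0 | h1
    · simp [normalizedPlacement, h0]
    · simp [normalizedPlacement, h1, hh]

end normalizedPlacement

theorem targets_mem_hypersimplex {ι : Type*} [Fintype ι] {h m : ℕ} (hh : 1 ≤ h) {n : ι → ℕ}
    (hn : ∀ l, 1 ≤ n l) {e : ι → ℝ} (he : ∀ l, 1 - (h : ℝ) / n l ≤ e l ∧ e l ≤ 1)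
    (hsum : ∑ l, (n l : ℝ) * (1 - e l) = (h * m : ℕ)) :
    (fun l => n l * (1 - e l) / h) ∈ hypersimplex ι m := by
  have hhR : (0 : ℝ) < h := by exact_mod_cast hh
  refine ⟨fun l _ => ⟨by have := (he l).2; positivity, ?_⟩, ?_⟩
  · have hnR : (0 : ℝ) < n l := by exact_mod_cast hn l
    rw [div_le_one hhR, ← le_div_iff₀' hnR]
    linarith [(he l).1]
  · simp only [mem_ofPred_eq, ← Finset.sum_div, hsum]
    push_cast
    field_simp

theorem stmt14_general (L h M : ℕ) (hh : 1 ≤ h) (hM : 1 ≤ M)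
    (n : Fin L → ℕ) (hn1 : ∀ l, 1 ≤ n l) (hdvd : h ∣ M)
    (e : Fin L → ℝ)
    (he : ∀ l, 1 - (h : ℝ) / (n l : ℝ) ≤ e l ∧ e l ≤ 1)
    (hsum : ∑ l, (n l : ℝ) * (1 - e l) = (M : ℝ)) :
    ∃ o : (Fin L → Fin (M + 1)) → ℝ,
      (∀ z ∈ FeasCheck L h M, 0 ≤ o z) ∧
      (∑ z ∈ FeasCheck L h M, o z = 1) ∧
      (∀ l : Fin L,
        ∑ z ∈ (FeasCheck L h M).filter (fun z => (z l : ℕ) = h), o z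
          = (n l : ℝ) * (1 - e l) / (h : ℝ)) ∧
      (∀ l : Fin L,
        ∑ z ∈ FeasCheck L h M, o z * (1 - ((z l : ℕ) : ℝ) / (n l : ℝ))
          = e l) := by
  obtain ⟨m, rfl⟩ := hdvd
  have hh0 : h ≠ 0 := by omega
  set x : Fin L → ℝ := fun l => n l * (1 - e l) / h
  obtain ⟨o, ho₀, ho₁, hox⟩ := Finset.exists_weights_of_mem_convexHull_image
    (normalizedPlacement_injective hh0).injOn
    (convexHull_mono (zeroOne_hypersimplex_subset_normalizedPlacement_image
      (Nat.pos_of_mul_pos_left hM) hh0) (hypersimplex_subset_convexHull m (targets_mem_hypersimplex hh hn1 he hsum)))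
  have hmarg (l : Fin L) : ∑ z ∈ FeasCheck L h (h * m), o z * normalizedPlacement h z l = x l := by
    simpa using congr_fun hox l
  refine ⟨o, ho₀, ho₁, fun l => ?_, fun l => ?_⟩
  · refine (Finset.sum_filter _ _).trans ((Finset.sum_congr rfl fun z hz => ?_).trans (hmarg l))
    rw [normalizedPlacement_of_mem_feasCheck hh0 hz]
    split_ifs <;> simp
  · have hn : (n l : ℝ) ≠ 0 := by have := hn1 l; positivity
    calc ∑ z ∈ FeasCheck L h (h * m), o z * (1 - ((z l : ℕ) : ℝ) / n l)
        = ∑ z ∈ FeasCheck L h (h * m), o z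
          - h / n l * ∑ z ∈ FeasCheck L h (h * m), o z * normalizedPlacement h z l := by
          rw [Finset.mul_sum, ← Finset.sum_sub_distrib]
          refine Finset.sum_congr rfl fun z _ => ?_
          simp only [normalizedPlacement]
          field_simp
      _ = e l := by
          rw [ho₁, hmarg l]
          simp only [x]
          field_simp
          ring

/-- Existence step in the proof that SPC performance does not improve with the
number of chunks: given target per-subset miss probabilities `e_l` with
`1 − h/n_l ≤ e_l ≤ 1` and `∑_l n_l·(1 − e_l) = M`, there is a pmf `ǒ` on `F̌`
(placements caching `0` or `h` whole files per subset) with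
`∑_{ž: ž_l = h} ǒ(ž) = n_l(1 − e_l)/h` for every `l`, and consequently
`∑_ž ǒ(ž)·(1 − ž_l/n_l) = e_l` for every `l`. -/
theorem stmt14 (L h M : ℕ) (hL : 1 ≤ L) (hh : 1 ≤ h) (hM : 1 ≤ M)
    (n : Fin L → ℕ) (hn1 : ∀ l, 1 ≤ n l) (hhn : ∀ l, h ≤ n l) (hdvd : h ∣ M)
    (e : Fin L → ℝ)
    (he : ∀ l, 1 - (h : ℝ) / (n l : ℝ) ≤ e l ∧ e l ≤ 1)
    (hsum : ∑ l, (n l : ℝ) * (1 - e l) = (M : ℝ)) :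
    ∃ o : (Fin L → Fin (M + 1)) → ℝ,
      (∀ z ∈ FeasCheck L h M, 0 ≤ o z) ∧
      (∑ z ∈ FeasCheck L h M, o z = 1) ∧
      (∀ l : Fin L,
        ∑ z ∈ (FeasCheck L h M).filter (fun z => (z l : ℕ) = h), o z
          = (n l : ℝ) * (1 - e l) / (h : ℝ)) ∧
      (∀ l : Fin L,
        ∑ z ∈ FeasCheck L h M, o z * (1 - ((z l : ℕ) : ℝ) / (n l : ℝ))
          = e l) :=
  stmt14_general L h M hh hM n hn1 hdvd e he hsum
end
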